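/- Soundness of LKF with respect to classical propositional logic: if the unfocussed sequent ⊢ Θ ⇑ Γ is derivable in LKF, then the classical sequent ⊢ |Θ|, |Γ| (obtained by erasing polarities and shifts) is valid in classical propositional logic (e.g., true under every Boolean valuation when interpreting ∧⁺ and ∧⁻ as conjunction and ∨⁺ and ∨⁻ as disjunction). -/
import Mathlib


/-- Polarised classical formulae: positive/negative atoms, and
positive (`andP`,`orP`) and negative (`andN`,`orN`) connectives. -/
inductive PForm (At : Type) : Type
  | pos : At → PForm At
  | neg : At → PForm At
  | andP : PForm At → PForm At → PForm At
  | orP : PForm At → PForm At → PForm At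
  | andN : PForm At → PForm At → PForm At
  | orN : PForm At → PForm At → PForm At
  deriving DecidableEq

namespace PForm

/-- Involutive negation on polarised formulae. -/
def pneg {At : Type} : PForm At → PForm At
  | .pos a => .neg a
  | .neg a => .pos a
  | .andP A B => .orN A.pneg B.pneg
  | .orP A B => .andN A.pneg B.pneg
  | .andN A B => .orP A.pneg B.pneg
  | .orN A B => .andP A.pneg B.pneg

/-- `A` is a positive formula. -/
def isPos {At : Type} : PForm At → Prop
  | .pos _ => True
  | .andP _ _ => True
  | .orP _ _ => True
  | _ => False

/-- `A` is a negative formula. -/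
def isNeg {At : Type} : PForm At → Prop
  | .neg _ => True
  | .andN _ _ => True
  | .orN _ _ => True
  | _ => False

end PForm
mutual
/-- Focussed sequents `⊢ Θ ⇓ A` of Liang–Miller's LKF. -/
inductive FocS {At : Type} : Multiset (PForm At) → PForm At → Prop
  | andP {Θ : Multiset (PForm At)} {A₁ A₂ : PForm At} :
      FocS Θ A₁ → FocS Θ A₂ → FocS Θ (.andP A₁ A₂)
  | orP₁ {Θ : Multiset (PForm At)} {A₁ A₂ : PForm At} :
      FocS Θ A₁ → FocS Θ (.orP A₁ A₂)
  | orP₂ {Θ : Multiset (PForm At)} {A₁ A₂ : PForm At} :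
      FocS Θ A₂ → FocS Θ (.orP A₁ A₂)
  | release {Θ : Multiset (PForm At)} {N : PForm At} :
      N.isNeg → UnfS Θ {N} → FocS Θ N
  | init {Θ : Multiset (PForm At)} {a : At} :
      PForm.neg a ∈ Θ → FocS Θ (.pos a)
/-- Unfocussed sequents `⊢ Θ ⇑ Γ` of Liang–Miller's LKF. -/
inductive UnfS {At : Type} : Multiset (PForm At) → Multiset (PForm At) → Prop
  | andN {Θ Γ : Multiset (PForm At)} {A₁ A₂ : PForm At} :
      UnfS Θ (A₁ ::ₘ Γ) → UnfS Θ (A₂ ::ₘ Γ) → UnfS Θ (PForm.andN A₁ A₂ ::ₘ Γ)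
  | orN {Θ Γ : Multiset (PForm At)} {A₁ A₂ : PForm At} :
      UnfS Θ (A₁ ::ₘ A₂ ::ₘ Γ) → UnfS Θ (PForm.orN A₁ A₂ ::ₘ Γ)
  | store {Θ Γ : Multiset (PForm At)} {P : PForm At} :
      (P.isPos ∨ ∃ a : At, P = .neg a) → UnfS (P ::ₘ Θ) Γ → UnfS Θ (P ::ₘ Γ)
  | decide {Θ : Multiset (PForm At)} {P : PForm At} :
      P ∈ Θ → P.isPos → FocS Θ P → UnfS Θ 0
end

/-- Boolean evaluation of a polarised formula under a valuation, after erasing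
polarities and shifts: `∧⁺`/`∧⁻` as conjunction, `∨⁺`/`∨⁻` as disjunction,
`ā` as the negation of `a`. -/
def PForm.eval {At : Type} (v : At → Bool) : PForm At → Bool
  | .pos a => v a
  | .neg a => !v a
  | .andP A B => A.eval v && B.eval v
  | .andN A B => A.eval v && B.eval v
  | .orP A B => A.eval v || B.eval v
  | .orN A B => A.eval v || B.eval v

/-- Soundness of LKF with respect to classical propositional logic: derivable
unfocussed sequents erase to classically valid sequents. -/
theorem lkf_soundness {At : Type} {Θ Γ : Multiset (PForm At)}
    (h : UnfS Θ Γ) :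
    ∀ v : At → Bool, ∃ A ∈ Θ + Γ, A.eval v = true := by
  refine UnfS.rec
    (motive_1 := fun Θ A _ => ∀ v : At → Bool,
      A.eval v = true ∨ ∃ B ∈ Θ, B.eval v = true)
    (motive_2 := fun Θ Γ _ => ∀ v : At → Bool,
      ∃ A ∈ Θ + Γ, A.eval v = true)
    ?_ ?_ ?_ ?_ ?_ ?_ ?_ ?_ ?_ h
  case _ => -- andP
    intro Θ A₁ A₂ h1 h2 ih1 ih2
    intro v
    rcases ih1 v with h | h
    · rcases ih2 v with h' | h'
      · left; simp [PForm.eval, h, h']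
      · right; exact h'
    · right; exact h
  case _ => -- orP₁
    intro Θ A₁ A₂ h ih v
    rcases ih v with h | h
    · left; simp [PForm.eval, h]
    · right; exact h
  case _ => -- orP₂
    intro Θ A₁ A₂ h ih v
    rcases ih v with h | h
    · left; simp [PForm.eval, h]
    · right; exact h
  case _ => -- release
    intro Θ N hn h ih v
    rcases ih v with ⟨A, hA, he⟩
    rw [Multiset.mem_add] at hA
    rcases hA with hA | hA
    · right; exact ⟨A, hA, he⟩
    · left
      rw [Multiset.mem_singleton] at hA
      subst hA; exact he
  case _ => -- init
    intro Θ a hmem v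
    by_cases hv : v a = true
    · left; exact hv
    · right
      refine ⟨_, hmem, ?_⟩
      simp [PForm.eval, hv]
  case _ => -- andN
    intro Θ Γ A₁ A₂ h1 h2 ih1 ih2 v
    rcases ih1 v with ⟨A, hA, he⟩
    rw [Multiset.mem_add, Multiset.mem_cons] at hA
    rcases hA with hA | hA | hA
    · exact ⟨A, by simp [hA], he⟩
    · rcases ih2 v with ⟨B, hB, he'⟩
      rw [Multiset.mem_add, Multiset.mem_cons] at hB
      rcases hB with hB | hB | hB
      · exact ⟨B, by simp [hB], he'⟩
      · refine ⟨PForm.andN A₁ A₂, by simp, ?_⟩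
        subst hA; subst hB
        simp [PForm.eval, he, he']
      · exact ⟨B, by simp [hB], he'⟩
    · exact ⟨A, by simp [hA], he⟩
  case _ => -- orN
    intro Θ Γ A₁ A₂ h ih v
    rcases ih v with ⟨A, hA, he⟩
    rw [Multiset.mem_add, Multiset.mem_cons, Multiset.mem_cons] at hA
    rcases hA with hA | hA | hA | hA
    · exact ⟨A, by simp [hA], he⟩
    · refine ⟨PForm.orN A₁ A₂, by simp, ?_⟩
      subst hA; simp [PForm.eval, he]
    · refine ⟨PForm.orN A₁ A₂, by simp, ?_⟩
      subst hA; simp [PForm.eval, he]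
    · exact ⟨A, by simp [hA], he⟩
  case _ => -- store
    intro Θ Γ P hp h ih v
    rcases ih v with ⟨A, hA, he⟩
    rw [Multiset.mem_add, Multiset.mem_cons] at hA
    refine ⟨A, ?_, he⟩
    rw [Multiset.mem_add, Multiset.mem_cons]
    tauto
  case _ => -- decide
    intro Θ P hmem hp h ih v
    rcases ih v with h' | ⟨B, hB, he⟩
    · exact ⟨_, by simp [hmem], h'⟩
    · exact ⟨B, by simp [hB], he⟩
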